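/- arXiv:1809.02358 — 2 statements merged into one kernel-verified Lean document; each statement's English description precedes it below -/
import Mathlib

section
/- Let (G,w) be a connected weighted graph with Θ*-classes E₁,...,E_k, and for each i let C_i^1,...,C_i^{r_i} be the connected components of G ∖ E_i. Then W(G,w) ≥ (1/2) Σ_{i=1}^k Σ_{j=1}^{r_i} w(C_i^j) · w^c(C_i^j), where w(C_i^j) = Σ_{x ∈ C_i^j} w(x) and w^c(C_i^j) = Σ_{x ∉ C_i^j} w(x). Equality holds if and only if all quotient graphs G/E_i are complete graphs. -/
/-!
By the distance decomposition, `W(G,w) = ∑ᵢ W(G/Eᵢ, wᵢ)`, where `wᵢ` gives each component `C` of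
`G ∖ Eᵢ` its weight `w(C)`: a double sum over `V` of a function of the components is a double sum
over the components, weighted by the fibre weights. In a connected graph distinct vertices are at
distance at least `1`, with equality exactly when they are adjacent, so `W(H,ω)` is at least the
total weight `½ ∑_{a ≠ b} ω(a) ω(b)` of pairs, with equality iff `H` is complete. For `H = G/Eᵢ`
that total is `½ ∑_C w(C) wᶜ(C)`.
-/

open Finset
open scoped Classical

noncomputable section

variable {V : Type*}

noncomputable instance fintypeCC [Fintype V] (G : SimpleGraph V) : Fintype G.ConnectedComponent :=
  @Fintype.ofFinite _ (Finite.of_surjective G.connectedComponentMk fun C => C.exists_rep)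

/-- `W(G,w) = ∑_{{u,v}⊆V(G)} w(u)w(v) d(u,v)`. -/
noncomputable def SimpleGraph.wienerMul [Fintype V] (G : SimpleGraph V) (w : V → ℝ) : ℝ :=
  (1 / 2) * ∑ u : V, ∑ v : V, (w u * w v) * (G.dist u v : ℝ)

/-- The Djoković–Winkler relation `Θ` on edges: `e Θ f` iff `e = u₁v₁`, `f = u₂v₂` are edges
with `d(u₁,u₂) + d(v₁,v₂) ≠ d(u₁,v₂) + d(v₁,u₂)`. -/
def SimpleGraph.theta (G : SimpleGraph V) (e f : Sym2 V) : Prop :=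
  ∃ u₁ v₁ u₂ v₂ : V, e = s(u₁, v₁) ∧ f = s(u₂, v₂) ∧ G.Adj u₁ v₁ ∧ G.Adj u₂ v₂ ∧
    G.dist u₁ u₂ + G.dist v₁ v₂ ≠ G.dist u₁ v₂ + G.dist v₁ u₂

/-- `E` (indexed by `Fin k`) is the family of `Θ*`-classes of `G`: a partition of the edge set
into nonempty classes, each class being the `Θ*`-closure (reflexive-transitive closure of `Θ`)
of any of its members. -/
def IsThetaStarPartition (G : SimpleGraph V) {k : ℕ} (E : Fin k → Set (Sym2 V)) : Prop :=
  (∀ i, (E i).Nonempty ∧ E i ⊆ G.edgeSet) ∧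
  (∀ e ∈ G.edgeSet, ∃! i, e ∈ E i) ∧
  (∀ i, ∀ e ∈ E i, ∀ f ∈ G.edgeSet,
    (f ∈ E i ↔ Relation.ReflTransGen G.theta e f))

/-- The quotient graph `G/F`. -/
def SimpleGraph.quotientGraph (G : SimpleGraph V) (F : Set (Sym2 V)) :
    SimpleGraph (G.deleteEdges F).ConnectedComponent where
  Adj C D := C ≠ D ∧ ∃ u v : V, G.Adj u v ∧
    (G.deleteEdges F).connectedComponentMk u = C ∧ (G.deleteEdges F).connectedComponentMk v = D
  symm := by
    constructor
    rintro C D ⟨hne, u, v, h, hu, hv⟩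
    exact ⟨hne.symm, v, u, h.symm, hv, hu⟩
  loopless := by constructor; rintro C ⟨hne, -⟩; exact hne rfl

namespace SimpleGraph

variable {α : Type*} [DecidableEq α]

lemma Reachable.quotientGraph_mk {G : SimpleGraph V} (F : Set (Sym2 V)) {u v : V}
    (h : G.Reachable u v) :
    (G.quotientGraph F).Reachable ((G.deleteEdges F).connectedComponentMk u)
      ((G.deleteEdges F).connectedComponentMk v) := by
  rw [reachable_iff_reflTransGen] at h ⊢
  refine Relation.ReflTransGen.lift' _ (fun a b hab => ?_) _ _ h
  by_cases hc : (G.deleteEdges F).connectedComponentMk a = (G.deleteEdges F).connectedComponentMk b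
  · simp only [Function.onFun, hc, Relation.ReflTransGen.refl]
  · exact Relation.ReflTransGen.single ⟨hc, a, b, hab, rfl, rfl⟩

lemma Connected.quotientGraph {G : SimpleGraph V} (hG : G.Connected) (F : Set (Sym2 V)) :
    (G.quotientGraph F).Connected := by
  have : Nonempty V := hG.nonempty
  refine ⟨fun C D => ?_⟩
  obtain ⟨u, rfl⟩ := C.exists_rep
  obtain ⟨v, rfl⟩ := D.exists_rep
  exact (hG u v).quotientGraph_mk F

lemma Connected.ite_le_dist {H : SimpleGraph α} (hH : H.Connected) (a b : α) :
    (if a = b then 0 else 1 : ℝ) ≤ H.dist a b := by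
  split_ifs with hab
  · positivity
  · exact_mod_cast hH.pos_dist_of_ne hab

lemma dist_eq_ite_iff {H : SimpleGraph α} {a b : α} :
    (H.dist a b : ℝ) = (if a = b then 0 else 1) ↔ (a ≠ b → H.Adj a b) := by
  split_ifs with hab
  · simp [hab]
  · simp [hab, dist_eq_one_iff_adj]

lemma Connected.wienerMul_ge {H : SimpleGraph α} [Fintype α] (hH : H.Connected)
    {ω : α → ℝ} (hω : ∀ a, 0 ≤ ω a) :
    (1 / 2) * ∑ a, ∑ b, ω a * ω b * (if a = b then 0 else 1) ≤ H.wienerMul ω :=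
  mul_le_mul_of_nonneg_left (Finset.sum_le_sum fun a _ => Finset.sum_le_sum fun b _ =>
    mul_le_mul_of_nonneg_left (hH.ite_le_dist a b) (mul_nonneg (hω a) (hω b))) (by norm_num)

lemma Connected.wienerMul_eq_iff {H : SimpleGraph α} [Fintype α] (hH : H.Connected)
    {ω : α → ℝ} (hω : ∀ a, 0 < ω a) :
    H.wienerMul ω = (1 / 2) * ∑ a, ∑ b, ω a * ω b * (if a = b then 0 else 1) ↔
      ∀ a b, a ≠ b → H.Adj a b := by
  have hle (a b : α) : ω a * ω b * (if a = b then 0 else 1) ≤ ω a * ω b * H.dist a b :=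
    mul_le_mul_of_nonneg_left (hH.ite_le_dist a b) (mul_pos (hω a) (hω b)).le
  rw [wienerMul, mul_right_inj' (by norm_num : (1 / 2 : ℝ) ≠ 0), eq_comm,
    Finset.sum_eq_sum_iff_of_le fun a _ => Finset.sum_le_sum fun b _ => hle a b]
  simp only [Finset.sum_eq_sum_iff_of_le fun b _ => hle _ b, Finset.mem_univ, forall_const]
  refine forall₂_congr fun a b => ?_
  rw [mul_right_inj' (mul_pos (hω a) (hω b)).ne', eq_comm, dist_eq_ite_iff]

end SimpleGraph

def fiberWeight {α : Type*} [DecidableEq α] [Fintype V] (f : V → α) (w : V → ℝ) (a : α) : ℝ :=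
  ∑ x, if f x = a then w x else 0

lemma fiberWeight_pos {α : Type*} [DecidableEq α] [Fintype V] {f : V → α} {w : V → ℝ}
    (hf : Function.Surjective f) (hw : ∀ v, 0 < w v) (a : α) :
    0 < fiberWeight f w a := by
  obtain ⟨x, rfl⟩ := hf a
  exact Finset.sum_pos' (fun y _ => by split_ifs <;> simp [(hw y).le])
    ⟨x, Finset.mem_univ x, by simp [hw x]⟩

section fiberWeight

variable {α : Type*} [DecidableEq α] [Fintype V] [Fintype α] (f : V → α) (w : V → ℝ)

lemma sum_fiberWeight_mul (g : α → ℝ) :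
    ∑ a, fiberWeight f w a * g a = ∑ x, w x * g (f x) := by
  simp only [fiberWeight, Finset.sum_mul, ite_mul, zero_mul]
  rw [Finset.sum_comm]
  simp

lemma sum_sum_mul_apply_comp (φ : α → α → ℝ) :
    ∑ u, ∑ v, w u * w v * φ (f u) (f v) =
      ∑ a, ∑ b, fiberWeight f w a * fiberWeight f w b * φ a b := by
  simp only [mul_assoc, ← Finset.mul_sum, sum_fiberWeight_mul]

lemma sum_fiberWeight_mul_compl :
    ∑ a, (∑ x, if f x = a then w x else 0) * (∑ x, if f x = a then 0 else w x) =
      ∑ a, ∑ b, fiberWeight f w a * fiberWeight f w b * (if a = b then 0 else 1) := by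
  rw [← sum_sum_mul_apply_comp f w fun a b => if a = b then 0 else 1]
  refine (sum_fiberWeight_mul f w fun a => ∑ x, if f x = a then 0 else w x).trans ?_
  simp only [Finset.mul_sum, mul_ite, mul_zero, mul_one, eq_comm]

end fiberWeight

lemma SimpleGraph.wienerMul_eq_sum_quotientGraph [Fintype V] {ι : Type*} [Fintype ι]
    (G : SimpleGraph V) (w : V → ℝ) (E : ι → Set (Sym2 V))
    (hdist : ∀ u v : V, G.dist u v =
      ∑ i, (G.quotientGraph (E i)).dist
        ((G.deleteEdges (E i)).connectedComponentMk u)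
        ((G.deleteEdges (E i)).connectedComponentMk v)) :
    G.wienerMul w = ∑ i, (G.quotientGraph (E i)).wienerMul
      (fiberWeight (G.deleteEdges (E i)).connectedComponentMk w) := by
  simp only [wienerMul, ← sum_sum_mul_apply_comp, ← Finset.mul_sum]
  congr 1
  simp only [hdist, Nat.cast_sum, Finset.mul_sum]
  exact (Finset.sum_congr rfl fun u _ => Finset.sum_comm).trans Finset.sum_comm

theorem wienerMul_ge_and_eq_iff_complete_general [Fintype V] (G : SimpleGraph V) (hG : G.Connected)
    (w : V → ℝ) (hw : ∀ v, 0 < w v)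
    (k : ℕ) (E : Fin k → Set (Sym2 V))
    (hdist : ∀ u v : V, G.dist u v =
      ∑ i, (G.quotientGraph (E i)).dist
        ((G.deleteEdges (E i)).connectedComponentMk u)
        ((G.deleteEdges (E i)).connectedComponentMk v)) :
    G.wienerMul w ≥ (1 / 2) * ∑ i, ∑ C : (G.deleteEdges (E i)).ConnectedComponent,
        (∑ x : V, if (G.deleteEdges (E i)).connectedComponentMk x = C then w x else 0) *
        (∑ x : V, if (G.deleteEdges (E i)).connectedComponentMk x = C then 0 else w x) ∧
    (G.wienerMul w = (1 / 2) * ∑ i, ∑ C : (G.deleteEdges (E i)).ConnectedComponent,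
        (∑ x : V, if (G.deleteEdges (E i)).connectedComponentMk x = C then w x else 0) *
        (∑ x : V, if (G.deleteEdges (E i)).connectedComponentMk x = C then 0 else w x) ↔
      ∀ i, ∀ C D : (G.deleteEdges (E i)).ConnectedComponent, C ≠ D →
        (G.quotientGraph (E i)).Adj C D) := by
  have hω : ∀ i C, 0 < fiberWeight (G.deleteEdges (E i)).connectedComponentMk w C :=
    fun i => fiberWeight_pos (fun C => C.exists_rep) hw
  have hle : ∀ i, (1 / 2) * ∑ C, ∑ D,
        fiberWeight (G.deleteEdges (E i)).connectedComponentMk w C *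
          fiberWeight (G.deleteEdges (E i)).connectedComponentMk w D * (if C = D then 0 else 1) ≤
      (G.quotientGraph (E i)).wienerMul
        (fiberWeight (G.deleteEdges (E i)).connectedComponentMk w) :=
    fun i => (hG.quotientGraph (E i)).wienerMul_ge fun C => (hω i C).le
  simp only [sum_fiberWeight_mul_compl, G.wienerMul_eq_sum_quotientGraph w E hdist]
  rw [Finset.mul_sum]
  refine ⟨Finset.sum_le_sum fun i _ => hle i, ?_⟩
  rw [eq_comm, Finset.sum_eq_sum_iff_of_le fun i _ => hle i]
  simp only [Finset.mem_univ, forall_const]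
  exact forall_congr' fun i => eq_comm.trans ((hG.quotientGraph (E i)).wienerMul_eq_iff (hω i))

/-- Let `(G,w)` be a connected weighted graph with `Θ*`-classes `E₁,…,E_k` and
let `C_i^1,…,C_i^{r_i}` be the components of `G ∖ Eᵢ`. Then
`W(G,w) ≥ (1/2) ∑ᵢ ∑ⱼ w(C_i^j) · w^c(C_i^j)`, with equality iff every quotient `G/Eᵢ` is a
complete graph (equivalently, iff `G` is a partial Hamming graph). -/
theorem wienerMul_ge_and_eq_iff_complete [Fintype V] (G : SimpleGraph V) (hG : G.Connected)
    (w : V → ℝ) (hw : ∀ v, 0 < w v)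
    (k : ℕ) (E : Fin k → Set (Sym2 V)) (hE : IsThetaStarPartition G E)
    (hdist : ∀ u v : V, G.dist u v =
      ∑ i, (G.quotientGraph (E i)).dist
        ((G.deleteEdges (E i)).connectedComponentMk u)
        ((G.deleteEdges (E i)).connectedComponentMk v)) :
    G.wienerMul w ≥ (1 / 2) * ∑ i, ∑ C : (G.deleteEdges (E i)).ConnectedComponent,
        (∑ x : V, if (G.deleteEdges (E i)).connectedComponentMk x = C then w x else 0) *
        (∑ x : V, if (G.deleteEdges (E i)).connectedComponentMk x = C then 0 else w x) ∧
    (G.wienerMul w = (1 / 2) * ∑ i, ∑ C : (G.deleteEdges (E i)).ConnectedComponent,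
        (∑ x : V, if (G.deleteEdges (E i)).connectedComponentMk x = C then w x else 0) *
        (∑ x : V, if (G.deleteEdges (E i)).connectedComponentMk x = C then 0 else w x) ↔
      ∀ i, ∀ C D : (G.deleteEdges (E i)).ConnectedComponent, C ≠ D →
        (G.quotientGraph (E i)).Adj C D) :=
  wienerMul_ge_and_eq_iff_complete_general G hG w hw k E hdist

end
end

section
/- Let G be a connected graph with Θ*-classes E₁,...,E_k, and suppose every quotient graph G/Eᵢ is a complete graph. Then for any weight w : V(G) → ℝ⁺, W(G,w) = (1/2) Σ_{i=1}^k Σ_{j=1}^{r_i} w(C_i^j) w^c(C_i^j), where C_i^1,...,C_i^{r_i} are the components of G ∖ Eᵢ, w(C_i^j) = Σ_{x∈C_i^j} w(x), and w^c(C_i^j) = Σ_{x∉C_i^j} w(x). -/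
/-! Since `G/Eᵢ` is complete, the `i`-th term of the distance formula is `1` exactly when `u` and
`v` lie in different components of `G ∖ Eᵢ`; grouping the pairs `(u, v)` by the component of `u`
turns `∑ w(u) w(v)` over such pairs into `∑ⱼ w(C_i^j) w^c(C_i^j)`. -/

open Finset
open scoped Classical

noncomputable section

variable {V : Type*}

theorem SimpleGraph.dist_eq_ite_of_forall_ne_adj {H : SimpleGraph V}
    (hH : ∀ a b, a ≠ b → H.Adj a b) (a b : V) : H.dist a b = if a = b then 0 else 1 := by
  rw [H.eq_top_iff_forall_ne_adj.mpr hH, SimpleGraph.dist_top]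

section

variable [Fintype V] {α R : Type*} [Fintype α] [CommSemiring R]

theorem sum_fiber_mul (f : V → α) (w : V → R) (g : α → R) :
    ∑ a, (∑ x, if f x = a then w x else 0) * g a = ∑ x, w x * g (f x) := by
  simp_rw [sum_mul, ite_mul, zero_mul]
  rw [sum_comm]
  simp

theorem sum_sum_mul_ite_ne_eq_sum_fiber_mul_compl (f : V → α) (w : V → R) :
    ∑ u, ∑ v, w u * w v * (if f u = f v then 0 else 1) =
      ∑ a, (∑ x, if f x = a then w x else 0) * (∑ x, if f x = a then 0 else w x) := by
  rw [sum_fiber_mul]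
  refine sum_congr rfl fun u _ => ?_
  rw [mul_sum]
  refine sum_congr rfl fun v _ => ?_
  by_cases h : f u = f v <;> simp [h, eq_comm (a := f v)]

end

theorem wienerMul_eq_of_complete_quotients_general [Fintype V] (G : SimpleGraph V)
    (w : V → ℝ)
    (k : ℕ) (E : Fin k → Set (Sym2 V))
    (hdist : ∀ u v : V, G.dist u v =
      ∑ i, (G.quotientGraph (E i)).dist
        ((G.deleteEdges (E i)).connectedComponentMk u)
        ((G.deleteEdges (E i)).connectedComponentMk v))
    (hcomplete : ∀ i, ∀ C D : (G.deleteEdges (E i)).ConnectedComponent, C ≠ D →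
      (G.quotientGraph (E i)).Adj C D) :
    G.wienerMul w = (1 / 2) * ∑ i, ∑ C : (G.deleteEdges (E i)).ConnectedComponent,
        (∑ x : V, if (G.deleteEdges (E i)).connectedComponentMk x = C then w x else 0) *
        (∑ x : V, if (G.deleteEdges (E i)).connectedComponentMk x = C then 0 else w x) := by
  unfold SimpleGraph.wienerMul
  congr 1
  calc ∑ u, ∑ v, w u * w v * (G.dist u v : ℝ)
      = ∑ i, ∑ u, ∑ v, w u * w v * (if (G.deleteEdges (E i)).connectedComponentMk u =
          (G.deleteEdges (E i)).connectedComponentMk v then (0 : ℝ) else 1) := by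
        simp only [hdist, SimpleGraph.dist_eq_ite_of_forall_ne_adj (hcomplete _), Nat.cast_sum,
          Nat.cast_ite, Nat.cast_zero, Nat.cast_one, mul_sum]
        exact (sum_congr rfl fun u _ => sum_comm).trans sum_comm
    _ = _ := sum_congr rfl fun i _ =>
        sum_sum_mul_ite_ne_eq_sum_fiber_mul_compl (G.deleteEdges (E i)).connectedComponentMk w

/-- Let `G` be a connected graph whose `Θ*`-classes are `E₁,…,E_k` and
suppose every quotient graph `G/Eᵢ` is complete. Then for any (positive) weight `w`,
`W(G,w) = (1/2) ∑ᵢ ∑ⱼ w(C_i^j) w^c(C_i^j)`, where `C_i^1,…,C_i^{r_i}` are the components of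
`G ∖ Eᵢ`. -/
theorem wienerMul_eq_of_complete_quotients [Fintype V] (G : SimpleGraph V) (hG : G.Connected)
    (w : V → ℝ) (hw : ∀ v, 0 < w v)
    (k : ℕ) (E : Fin k → Set (Sym2 V)) (hE : IsThetaStarPartition G E)
    (hdist : ∀ u v : V, G.dist u v =
      ∑ i, (G.quotientGraph (E i)).dist
        ((G.deleteEdges (E i)).connectedComponentMk u)
        ((G.deleteEdges (E i)).connectedComponentMk v))
    (hcomplete : ∀ i, ∀ C D : (G.deleteEdges (E i)).ConnectedComponent, C ≠ D →
      (G.quotientGraph (E i)).Adj C D) :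
    G.wienerMul w = (1 / 2) * ∑ i, ∑ C : (G.deleteEdges (E i)).ConnectedComponent,
        (∑ x : V, if (G.deleteEdges (E i)).connectedComponentMk x = C then w x else 0) *
        (∑ x : V, if (G.deleteEdges (E i)).connectedComponentMk x = C then 0 else w x) :=
  wienerMul_eq_of_complete_quotients_general G w k E hdist hcomplete

end
end
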